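/- arXiv:2409.09064 — 11 statements merged into one kernel-verified Lean document; each statement's English description precedes it below -/
import Mathlib

section
/- Let p : ℕ⁺ → ℝ be a sequence of box prices with p_n ≥ 0 and ∑_{n=1}^∞ p_n = 1. If ∑_{n=1}^∞ n·p_n < ∞, then a strategy exists: there is a sequence a : ℕ⁺ → ℝ with a_n ≥ 0 and ∑_{n=1}^∞ a_n = 1 such that for every finite-cycle-permutation σ of the positive integers, the set {n : a_n ≥ ∑_{m ∈ orbit_σ(n)} p_m} is infinite. -/
/-!
Let `tailSum p n = ∑_{m ≥ n} p m`. Exchanging the order of summation gives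
`∑ₙ tailSum p n = ∑ₙ n * p n < ∞`, so outside some finite set the tail sums have total mass less
than `1`; a strategy can give the amount `tailSum p n` to every such `n` and the remaining mass to
one prisoner.
If all cycles are finite, only finitely many cycles meet `{1, …, L}`, so infinitely many `n` are
the minimum of their cycle; for those the cycle price is at most `tailSum p n`.
-/

/-- A permutation of the positive integers all of whose cycles (orbits) are finite. -/
def FiniteCycles (s : Equiv.Perm ℕ+) : Prop :=
  ∀ n : ℕ+, {m : ℕ+ | s.SameCycle n m}.Finite

/-- The price of the cycle of `n` under the permutation `s`, for box prices `p`. -/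
noncomputable def cyclePrice (s : Equiv.Perm ℕ+) (p : ℕ+ → ℝ) (n : ℕ+) : ℝ :=
  ∑' m : {m : ℕ+ | s.SameCycle n m}, p m

lemma PNat.hasSum_ite_le (m : ℕ+) (x : ℝ) :
    HasSum (fun n : ℕ+ => if n ≤ m then x else 0) (m * x) := by
  have hIcc : ∀ n, n ∈ Finset.Icc 1 m ↔ n ≤ m := fun n => by simp
  have : HasSum (fun n : ℕ+ => if n ≤ m then x else 0)
      (∑ n ∈ Finset.Icc 1 m, if n ≤ m then x else 0) :=
    hasSum_sum_of_ne_finset_zero fun n hn => if_neg (mt (hIcc n).2 hn)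
  rwa [Finset.sum_ite_of_true (fun n hn => (hIcc n).1 hn), Finset.sum_const, PNat.card_Icc,
    PNat.one_coe, add_tsub_cancel_right, nsmul_eq_mul] at this

noncomputable def tailSum (p : ℕ+ → ℝ) (n : ℕ+) : ℝ := ∑' m : Set.Ici n, p m

lemma summable_tailSum {p : ℕ+ → ℝ} (hp : ∀ n, 0 ≤ p n)
    (h : Summable fun n : ℕ+ => (n : ℝ) * p n) : Summable (tailSum p) := by
  set F : ℕ+ × ℕ+ → ℝ := fun x => Set.indicator (Set.Ici x.1) p x.2
  have hF : 0 ≤ F := fun x => Set.indicator_nonneg (fun n _ => hp n) _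
  have hcolumn : ∀ m, HasSum (fun n => F (n, m)) (m * p m) := fun m => by
    simpa only [F, Set.indicator_apply, Set.mem_Ici] using PNat.hasSum_ite_le m (p m)
  have hsumF : Summable F := by
    rw [← (Equiv.prodComm _ _).summable_iff]
    refine (summable_prod_of_nonneg fun x => hF (Equiv.prodComm _ _ x)).2
      ⟨fun m => (hcolumn m).summable, ?_⟩
    simpa only [Equiv.prodComm_apply, Prod.swap_prod_mk, (hcolumn _).tsum_eq] using h
  exact ((summable_prod_of_nonneg hF).1 hsumF).2.congr fun n => (tsum_subtype _ _).symm

lemma tailSum_nonneg {p : ℕ+ → ℝ} (hp : ∀ n, 0 ≤ p n) (n : ℕ+) : 0 ≤ tailSum p n :=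
  tsum_nonneg fun m => hp m

lemma cyclePrice_le_tailSum {σ : Equiv.Perm ℕ+} {p : ℕ+ → ℝ} (hp : ∀ n, 0 ≤ p n)
    (hsp : Summable p) {n : ℕ+} (hmin : ∀ m, σ.SameCycle n m → n ≤ m) :
    cyclePrice σ p n ≤ tailSum p n :=
  (hsp.subtype _).tsum_le_tsum_of_inj (Set.inclusion hmin) (Set.inclusion_injective hmin)
    (fun m _ => hp m) (fun _ => le_rfl) (hsp.subtype _)

theorem FiniteCycles.infinite_setOf_cycle_min {σ : Equiv.Perm ℕ+} (hσ : FiniteCycles σ) :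
    {n : ℕ+ | ∀ m, σ.SameCycle n m → n ≤ m}.Infinite := by
  refine Set.infinite_of_forall_exists_gt fun L => ?_
  obtain ⟨x, hx⟩ := ((Set.finite_Iic L).biUnion fun k _ => hσ k).exists_notMem
  have hcycle_gt : ∀ m, σ.SameCycle x m → L < m := fun m hm => not_le.1 fun hmL =>
    hx (Set.mem_biUnion (Set.mem_Iic.2 hmL) hm.symm)
  obtain ⟨n, hxn, hn_min⟩ := Set.exists_min_image _ id (hσ x) ⟨x, Equiv.Perm.SameCycle.refl σ x⟩
  exact ⟨n, fun m hnm => hn_min m (hxn.trans hnm), hcycle_gt n hxn⟩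

theorem exists_hasSum_one_eventually_ge {α : Type*} [Nonempty α] {t : α → ℝ}
    (ht0 : ∀ i, 0 ≤ t i) (ht : Summable t) :
    ∃ a : α → ℝ, (∀ i, 0 ≤ a i) ∧ HasSum a 1 ∧ ∀ᶠ i in Filter.cofinite, t i ≤ a i := by
  classical
  obtain ⟨s, hs⟩ := ((tendsto_tsum_compl_atTop_zero t).eventually_lt_const one_pos).exists
  set T := ∑' i : {i // i ∉ s}, t i
  obtain ⟨i₀⟩ := ‹Nonempty α›
  have hmass : ∀ i, 0 ≤ if i = i₀ then 1 - T else 0 := fun i => by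
    split_ifs <;> linarith
  refine ⟨fun i => Set.indicator (↑s)ᶜ t i + if i = i₀ then 1 - T else 0,
    fun i => add_nonneg (Set.indicator_nonneg (fun i _ => ht0 i) i) (hmass i), ?_, ?_⟩
  · have hsum : HasSum _ (T + (1 - T)) :=
      (hasSum_subtype_iff_indicator.1 (ht.subtype _).hasSum).add (hasSum_ite_eq i₀ (1 - T))
    rwa [add_sub_cancel] at hsum
  · refine Filter.eventually_cofinite.2 (s.finite_toSet.subset fun i hi => ?_)
    by_contra his
    exact hi ((Set.indicator_of_mem his t).symm.le.trans (le_add_of_nonneg_right (hmass i)))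

theorem stmt_0 (p : ℕ+ → ℝ) (hp : ∀ n, 0 ≤ p n) (hpsum : HasSum p 1)
    (h : Summable fun n : ℕ+ => (n : ℝ) * p n) :
    ∃ a : ℕ+ → ℝ, (∀ n, 0 ≤ a n) ∧ HasSum a 1 ∧
      ∀ σ : Equiv.Perm ℕ+, FiniteCycles σ →
        {n : ℕ+ | cyclePrice σ p n ≤ a n}.Infinite := by
  obtain ⟨a, ha0, ha1, htail_le⟩ :=
    exists_hasSum_one_eventually_ge (tailSum_nonneg hp) (summable_tailSum hp h)
  refine ⟨a, ha0, ha1, fun σ hσ => ?_⟩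
  refine (hσ.infinite_setOf_cycle_min.sdiff (Filter.eventually_cofinite.1 htail_le)).mono ?_
  rintro n ⟨hmin, hn⟩
  exact (cyclePrice_le_tailSum hp hpsum.summable hmin).trans (not_not.1 hn)
end

section
/- Let p_n = 1/n² for every positive integer n. Then for every permutation δ of the positive integers, ∑_{n=1}^∞ n·p_{δ(n)} = ∞ (the series of nonnegative terms n·δ(n)^{-2}... i.e. n/δ(n)² diverges). -/
open Finset Function

/-!
Writing `k = δ n`, the series is `∑ δ⁻¹ k / k²`. On the block `N < k ≤ 2N` the `N` distinct
positive integers `δ⁻¹ k` sum to at least `N² / 2`, while `k² ≤ 4N²`, so every such block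
contributes at least `1/8`. Blocks beyond any given finite set contradict the Cauchy criterion.
-/

lemma sq_card_div_two_le_sum_coe (s : Finset ℕ+) : (#s : ℝ) ^ 2 / 2 ≤ ∑ x ∈ s, (x : ℝ) := by
  have gauss (n : ℕ) : (n : ℤ) ^ 2 ≤ 2 * ∑ i ∈ range n, (1 + i : ℤ) := by
    induction n with
    | zero => simp
    | succ n ih => rw [sum_range_succ]; push_cast; nlinarith
  have hbound := sum_range_le_sum
    (s := s.map ⟨fun x : ℕ+ => ((x : ℕ) : ℤ), Nat.cast_injective.comp PNat.coe_injective⟩) (c := 1)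
    (by simpa using fun a _ => a.pos)
  rw [card_map, sum_map] at hbound
  have key : (((#s : ℤ) ^ 2 : ℤ) : ℝ) ≤ ((2 * ∑ x ∈ s, ((x : ℕ) : ℤ) : ℤ) : ℝ) :=
    Int.cast_le.2 ((gauss #s).trans (by simpa using hbound))
  push_cast at key
  linarith

lemma one_div_eight_le_sum_Ioc_div_sq {f : ℕ+ → ℕ+} (hf : Injective f) (N : ℕ+) :
    1 / 8 ≤ ∑ k ∈ Ioc N (2 * N), (f k : ℝ) / (k : ℝ) ^ 2 := by
  have hcard : #((Ioc N (2 * N)).image f) = N := by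
    rw [card_image_of_injective _ hf, PNat.card_Ioc, PNat.mul_coe, PNat.val_ofNat]; omega
  have hf_sum := sq_card_div_two_le_sum_coe ((Ioc N (2 * N)).image f)
  rw [hcard, sum_image hf.injOn] at hf_sum
  calc (1 : ℝ) / 8 = (N : ℝ) ^ 2 / 2 / (2 * N) ^ 2 := by field_simp; ring
    _ ≤ (∑ k ∈ Ioc N (2 * N), (f k : ℝ)) / (2 * N) ^ 2 := by gcongr
    _ = ∑ k ∈ Ioc N (2 * N), (f k : ℝ) / (2 * N) ^ 2 := sum_div ..
    _ ≤ ∑ k ∈ Ioc N (2 * N), (f k : ℝ) / (k : ℝ) ^ 2 := by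
      gcongr with k hk
      exact_mod_cast (mem_Ioc.1 hk).2

theorem not_summable_div_sq_of_injective {f : ℕ+ → ℕ+} (hf : Injective f) :
    ¬ Summable fun k : ℕ+ => (f k : ℝ) / (k : ℝ) ^ 2 := by
  intro hsum
  obtain ⟨s, hs⟩ := hsum.vanishing (Iio_mem_nhds (by norm_num : (0 : ℝ) < 1 / 8))
  obtain ⟨N, hN⟩ := s.exists_le
  have hdisj : Disjoint (Ioc N (2 * N)) s :=
    disjoint_left.2 fun k hk hks => (hN k hks).not_gt (mem_Ioc.1 hk).1
  exact (one_div_eight_le_sum_Ioc_div_sq hf N).not_gt (hs _ hdisj)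

theorem stmt_3 (δ : Equiv.Perm ℕ+) :
    ¬ Summable fun n : ℕ+ => (n : ℝ) * (1 / ((δ n : ℝ)) ^ 2) := by
  rw [← δ.symm.summable_iff]
  simpa [Function.comp_def, div_eq_mul_inv] using not_summable_div_sq_of_injective δ.symm.injective
end

section
/- Let p_n = 1/n² for every positive integer n. Then for every permutation δ of the positive integers and every positive integer m, one has ∑_{n=1}^{m} 1/n ≤ ∑_{n=1}^∞ δ(n)·p_n = ∑_{n=1}^∞ δ(n)/n², where the right-hand side is taken in [0, ∞] (i.e., the identity permutation gives the minimum of ∑ δ(n)/n² over all permutations δ). -/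
open scoped BigOperators ENNReal

/-!
For distinct positive integers the reciprocal sum is at most the harmonic sum of the same
length, since the `i`-th smallest of them is at least `i`. Combined with the AM–GM bound
`δ(n)/n² + 1/δ(n) ≥ 2/n` this gives `∑_{n ≤ m} δ(n)/n² ≥ ∑_{n ≤ m} 1/n` already for the
partial sums of any injective `δ`.
-/

open Finset

lemma PNat.sum_Icc_one_eq_sum_Icc_coe {M : Type*} [AddCommMonoid M] (f : ℕ → M) (m : ℕ+) :
    ∑ n ∈ Icc 1 m, f n = ∑ k ∈ Icc 1 (m : ℕ), f k := by
  rw [← PNat.one_coe, ← PNat.map_subtype_embedding_Icc]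
  exact (sum_map (Icc 1 m) (Function.Embedding.subtype fun n : ℕ => 0 < n) f).symm

lemma PNat.sum_inv_le_sum_Icc_card (s : Finset ℕ+) :
    ∑ k ∈ s, ((k : ℕ) : ℝ)⁻¹ ≤ ∑ k ∈ Icc 1 #s, (k : ℝ)⁻¹ := by
  induction s using Finset.induction_on_max with
  | empty => simp
  | insert a s hlt ih =>
    have ha : a ∉ s := fun h => lt_irrefl a (hlt a h)
    have hcard : #s + 1 ≤ (a : ℕ) := by
      have : #s ≤ #(Ico 1 a) := card_le_card fun x hx => mem_Ico.2 ⟨one_le, hlt x hx⟩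
      rw [PNat.card_Ico, PNat.one_coe] at this
      have := a.pos
      omega
    rw [sum_insert ha, card_insert_of_notMem ha, sum_Icc_succ_top (by omega), add_comm]
    gcongr

lemma two_div_le_div_sq_add_one_div {a x : ℝ} (ha : 0 < a) (hx : 0 < x) :
    2 / x ≤ a / x ^ 2 + 1 / a := by
  rw [div_add_div _ _ (by positivity) ha.ne', div_le_div_iff₀ hx (by positivity)]
  nlinarith [sq_nonneg (a - x), mul_pos ha hx]

theorem sum_one_div_le_sum_div_sq {δ : ℕ+ → ℕ+} {m : ℕ+} (hδ : Set.InjOn δ (Icc 1 m)) :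
    ∑ n ∈ Icc 1 m, (1 : ℝ) / (n : ℕ) ≤ ∑ n ∈ Icc 1 m, ((δ n : ℕ) : ℝ) / ((n : ℕ) : ℝ) ^ 2 := by
  set H := ∑ n ∈ Icc 1 m, (1 : ℝ) / (n : ℕ)
  have hrecip : ∑ n ∈ Icc 1 m, (1 : ℝ) / (δ n : ℕ) ≤ H := by
    have := PNat.sum_inv_le_sum_Icc_card ((Icc 1 m).image δ)
    rw [sum_image hδ, card_image_of_injOn hδ, PNat.card_Icc, PNat.one_coe, Nat.add_sub_cancel,
      ← PNat.sum_Icc_one_eq_sum_Icc_coe (fun k => (k : ℝ)⁻¹)] at this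
    simpa only [one_div, H] using this
  have hamgm : ∑ n ∈ Icc 1 m, 2 / ((n : ℕ) : ℝ) ≤
      ∑ n ∈ Icc 1 m, (((δ n : ℕ) : ℝ) / ((n : ℕ) : ℝ) ^ 2 + 1 / (δ n : ℕ)) :=
    sum_le_sum fun n _ => two_div_le_div_sq_add_one_div (by positivity) (by positivity)
  rw [sum_add_distrib] at hamgm
  have h2H : ∑ n ∈ Icc 1 m, 2 / ((n : ℕ) : ℝ) = 2 * H := by
    rw [mul_sum]; simp only [mul_one_div]
  linarith

lemma ENNReal.ofReal_natCast_div_natCast_pow (a : ℕ) {b : ℕ} (hb : b ≠ 0) (k : ℕ) :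
    ENNReal.ofReal ((a : ℝ) / (b : ℝ) ^ k) = (a : ℝ≥0∞) / (b : ℝ≥0∞) ^ k := by
  rw [ENNReal.ofReal_div_of_pos (by positivity), ENNReal.ofReal_pow (by positivity)]
  simp

theorem stmt_4 (δ : Equiv.Perm ℕ+) (m : ℕ+) :
    ∑ n ∈ Finset.Icc 1 m, (1 : ℝ≥0∞) / ((n : ℕ) : ℝ≥0∞) ≤
      ∑' n : ℕ+, ((δ n : ℕ) : ℝ≥0∞) / (((n : ℕ) : ℝ≥0∞)) ^ 2 := by
  have hreal := sum_one_div_le_sum_div_sq (δ.injective.injOn (s := Icc 1 m))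
  calc ∑ n ∈ Icc 1 m, (1 : ℝ≥0∞) / ((n : ℕ) : ℝ≥0∞)
      = ENNReal.ofReal (∑ n ∈ Icc 1 m, (1 : ℝ) / (n : ℕ)) := by
        rw [ENNReal.ofReal_sum_of_nonneg fun n _ => by positivity]
        simp
    _ ≤ ENNReal.ofReal (∑ n ∈ Icc 1 m, ((δ n : ℕ) : ℝ) / ((n : ℕ) : ℝ) ^ 2) :=
        ENNReal.ofReal_le_ofReal hreal
    _ = ∑ n ∈ Icc 1 m, ((δ n : ℕ) : ℝ≥0∞) / ((n : ℕ) : ℝ≥0∞) ^ 2 := by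
        rw [ENNReal.ofReal_sum_of_nonneg fun n _ => by positivity]
        exact sum_congr rfl fun n _ => ENNReal.ofReal_natCast_div_natCast_pow _ n.ne_zero 2
    _ ≤ _ := ENNReal.sum_le_tsum _
end

section
/- Let p : ℕ⁺ → ℝ be a sequence with p_n ≥ 0 and ∑_{n=1}^∞ p_n = 1, and suppose that for every permutation δ of the positive integers, ∑_{n=1}^∞ n·p_{δ(n)} = ∞. Then there is no strategy: for every sequence a : ℕ⁺ → ℝ with a_n ≥ 0 and ∑_{n=1}^∞ a_n = 1, there exists a finite-cycle-permutation σ of the positive integers such that the set {n : a_n ≥ ∑_{m ∈ orbit_σ(n)} p_m} is finite. -/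
open scoped BigOperators ENNReal

/-! Perturb `a` to a strictly positive summable `c > a` and list the boxes as `e 0, e 1, …` with
`c ∘ e` non-increasing. For `q m = p (e m)` the hypothesis gives
`∑_j ∑_{m ≥ j} q m = ∑_m (m + 1) q m = ∞`, whereas `∑_j c (e j) < ∞`, so infinitely many tails
`∑_{m ≥ j} q m` exceed `c (e j)`. Among those `j` choose cuts `F 0 < F 1 < ⋯` such that already the
block `[F i, F (i + 1))` costs more than `c (e (F i))`, and let `σ` cycle through each block. A
prisoner `e x` in a block `i ≥ 1` then has `a (e x) < c (e x) ≤ c (e (F i))`, less than the price of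
his cycle, so only the finitely many prisoners `e x` with `x < F 1` can succeed. -/

namespace Equiv.Perm

variable {α β ι : Type*}

theorem sameCycle_permCongr_apply (e : α ≃ β) (f : Perm α) {x y : α} :
    (e.permCongr f).SameCycle (e x) (e y) ↔ f.SameCycle x y := by
  refine exists_congr fun k => ?_
  rw [← e.permCongrHom_coe, ← map_zpow, e.permCongrHom_coe, permCongr_apply,
    e.symm_apply_apply, e.apply_eq_iff_eq]

theorem sameCycle_finRotate {n : ℕ} (x y : Fin n) : (finRotate n).SameCycle x y := by
  have := NeZero.of_pos x.pos
  refine ⟨(y - x : Fin n).val, ?_⟩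
  rw [zpow_natCast, ← Equiv.Perm.iterate_eq_pow, ← finCycle_eq_finRotate_iterate,
    finCycle_apply, add_sub_cancel]

theorem exists_forall_sameCycle [Finite β] : ∃ f : Perm β, ∀ x y, f.SameCycle x y := by
  obtain ⟨n, ⟨e⟩⟩ := Finite.exists_equiv_fin β
  refine ⟨e.symm.permCongr (finRotate n), fun x y => ?_⟩
  simpa using (sameCycle_permCongr_apply e.symm _).2 (sameCycle_finRotate (e x) (e y))

theorem SameCycle.sigma_fst_eq {β : ι → Type*} {f : ∀ i, Perm (β i)} {x y : Σ i, β i}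
    (h : (sigmaCongrRight f).SameCycle x y) : x.1 = y.1 := by
  obtain ⟨k, rfl⟩ := h
  rw [← sigmaCongrRightHom_apply, ← map_zpow]
  rfl

theorem SameCycle.sigmaCongrRight {β : ι → Type*} {f : ∀ i, Perm (β i)} {i : ι} {u v : β i}
    (h : (f i).SameCycle u v) : (sigmaCongrRight f).SameCycle ⟨i, u⟩ ⟨i, v⟩ := by
  obtain ⟨k, rfl⟩ := h
  refine ⟨k, ?_⟩
  rw [← sigmaCongrRightHom_apply, ← map_zpow]
  rfl

theorem exists_sameCycle_iff_of_finite_fibers (g : α → ι) (hg : ∀ i, {x | g x = i}.Finite) :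
    ∃ f : Perm α, ∀ x y, f.SameCycle x y ↔ g x = g y := by
  have (i : ι) : Finite {x // g x = i} := (hg i).to_subtype
  choose τ hτ using fun i => exists_forall_sameCycle (β := {x // g x = i})
  refine ⟨(sigmaFiberEquiv g).permCongr (sigmaCongrRight τ), fun x y => ?_⟩
  obtain ⟨⟨i, u⟩, rfl⟩ := (sigmaFiberEquiv g).surjective x
  obtain ⟨⟨j, v⟩, rfl⟩ := (sigmaFiberEquiv g).surjective y
  rw [sameCycle_permCongr_apply, sigmaFiberEquiv_apply, sigmaFiberEquiv_apply, u.2, v.2]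
  refine ⟨SameCycle.sigma_fst_eq, ?_⟩
  rintro rfl
  exact (hτ i u v).sigmaCongrRight

end Equiv.Perm

theorem exists_equiv_nat_strictMono_comp {α β : Type*} [LinearOrder β] [Infinite α]
    (key : α → β) (hkey : Function.Injective key) (hfin : ∀ x, {y | key y < key x}.Finite) :
    ∃ e : ℕ ≃ α, StrictMono (key ∘ e) := by
  classical
  set rank : α → ℕ := fun x => {y | key y < key x}.ncard
  have rank_lt {x y : α} (h : key x < key y) : rank x < rank y :=
    Set.ncard_lt_ncard ⟨fun z hz => lt_trans hz h, fun hsub => lt_irrefl _ (hsub h)⟩ (hfin y)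
  have rank_le {x y : α} (h : key x ≤ key y) : rank x ≤ rank y :=
    Set.ncard_le_ncard (fun z hz => lt_of_lt_of_le hz h) (hfin y)
  have rank_inj : Function.Injective rank := fun x y hxy => by
    by_contra hne
    rcases (hkey.ne hne).lt_or_gt with h | h
    · exact (rank_lt h).ne hxy
    · exact (rank_lt h).ne' hxy
  have : Infinite (Set.range rank) := (Set.infinite_range_of_injective rank_inj).to_subtype
  refine ⟨(Nat.Subtype.orderIsoOfNat (Set.range rank)).toEquiv.trans
    (Equiv.ofInjective rank rank_inj).symm, fun j j' hj => ?_⟩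
  refine lt_of_not_ge fun h => ?_
  have := rank_le h
  simp only [Equiv.trans_apply, Equiv.apply_ofInjective_symm] at this
  exact absurd ((Nat.Subtype.orderIsoOfNat _).lt_iff_lt.2 hj) (not_lt.2 this)

theorem exists_equiv_nat_antitone_comp {α : Type*} [Infinite α] [Countable α] (c : α → ℝ)
    (hc : ∀ x, {y | c x ≤ c y}.Finite) : ∃ e : ℕ ≃ α, Antitone (c ∘ e) := by
  obtain ⟨ι, hι⟩ := Countable.exists_injective_nat α
  let key : α → ℝᵒᵈ ×ₗ ℕ := fun x => toLex (OrderDual.toDual (c x), ι x)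
  have hkey : Function.Injective key := fun x y h => hι (congrArg (fun k => (ofLex k).2) h)
  obtain ⟨e, he⟩ := exists_equiv_nat_strictMono_comp key hkey fun x => (hc x).subset fun y hy => by
    rcases Prod.Lex.lt_iff.1 hy with h | ⟨h, -⟩
    · exact h.le
    · exact (congrArg OrderDual.ofDual h).ge
  refine ⟨e, fun j j' hj => ?_⟩
  rcases Prod.Lex.le_iff.1 (he.monotone hj) with h | ⟨h, -⟩
  · exact h.le
  · exact (congrArg OrderDual.ofDual h).ge

theorem Summable.exists_gt_antitone_enumeration {α : Type*} [Infinite α] [Countable α]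
    {a : α → ℝ} (ha : Summable a) (ha0 : ∀ x, 0 ≤ a x) :
    ∃ (c : α → ℝ) (e : ℕ ≃ α), (∀ x, a x < c x) ∧ (∀ x, 0 ≤ c x) ∧ Summable c ∧
      Antitone (c ∘ e) := by
  obtain ⟨ι, hι⟩ := Countable.exists_injective_nat α
  set c : α → ℝ := fun x => a x + (1 / 2) ^ ι x
  have hc_pos (x : α) : 0 < c x := by have := ha0 x; positivity
  have hc : Summable c := ha.add (summable_geometric_two.comp_injective hι)
  obtain ⟨e, he⟩ := exists_equiv_nat_antitone_comp c fun x => by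
    simpa only [not_lt] using Filter.eventually_cofinite.1
      (hc.tendsto_cofinite_zero.eventually (gt_mem_nhds (hc_pos x)))
  exact ⟨c, e, fun x => lt_add_of_pos_right _ (by positivity), fun x => (hc_pos x).le, hc, he⟩

section

open Finset

theorem sum_range_succ_mul_eq_sum_sum_Ico {R : Type*} [Semiring R] (q : ℕ → R) (K : ℕ) :
    ∑ m ∈ range K, ((m : R) + 1) * q m = ∑ j ∈ range K, ∑ m ∈ Ico j K, q m := by
  rw [range_eq_Ico, sum_Ico_Ico_comm]
  refine sum_congr rfl fun m _ => ?_
  rw [sum_const, Nat.card_Ico, nsmul_eq_mul, Nat.sub_zero, Nat.cast_succ]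

variable {b q : ℕ → ℝ}

theorem summable_succ_mul_of_sum_Ico_le (hq : ∀ m, 0 ≤ q m) (hb : Summable b)
    (hb0 : ∀ j, 0 ≤ b j) (h : ∀ j k, ∑ m ∈ Ico j k, q m ≤ b j) :
    Summable fun m : ℕ => ((m : ℝ) + 1) * q m :=
  summable_of_sum_range_le (fun m => by have := hq m; positivity) fun K => by
    rw [sum_range_succ_mul_eq_sum_sum_Ico]
    exact (sum_le_sum fun j _ => h j K).trans (hb.sum_le_tsum _ fun j _ => hb0 j)

theorem frequently_lt_sum_Ico (hq : ∀ m, 0 ≤ q m) (hb : Summable b) (hb0 : ∀ j, 0 ≤ b j)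
    (hdiv : ¬ Summable fun m : ℕ => ((m : ℝ) + 1) * q m) :
    ∃ᶠ j in Filter.atTop, ∃ k, b j < ∑ m ∈ Ico j k, q m := by
  rw [Filter.frequently_atTop]
  intro N
  by_contra! H
  have hshift : Summable fun m : ℕ => ((m : ℝ) + 1) * q (m + N) :=
    summable_succ_mul_of_sum_Ico_le (q := fun m => q (m + N)) (fun m => hq _)
      ((summable_nat_add_iff N).2 hb) (fun j => hb0 _) fun j k => by
        rw [sum_Ico_add' q j k N]
        exact H _ (Nat.le_add_left N j) _
  refine hdiv ((summable_nat_add_iff N).1 (.of_nonneg_of_le (fun m => ?_) (fun m => ?_)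
    (hshift.mul_left ((N : ℝ) + 1))))
  · have := hq (m + N)
    positivity
  · rw [← mul_assoc]
    refine mul_le_mul_of_nonneg_right ?_ (hq _)
    push_cast
    nlinarith [mul_nonneg (Nat.cast_nonneg (α := ℝ) N) (Nat.cast_nonneg (α := ℝ) m)]

theorem exists_strictMono_lt_sum_Ico (hq : ∀ m, 0 ≤ q m) (hb : Summable b) (hb0 : ∀ j, 0 ≤ b j)
    (hdiv : ¬ Summable fun m : ℕ => ((m : ℝ) + 1) * q m) :
    ∃ F : ℕ → ℕ, StrictMono F ∧ ∀ i, b (F i) < ∑ m ∈ Ico (F i) (F (i + 1)), q m := by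
  have hnext (s : Finset ℕ) (hs : ∀ j ∈ s, ∃ k, b j < ∑ m ∈ Ico j k, q m) :
      ∃ y, (∃ k, b y < ∑ m ∈ Ico y k, q m) ∧ ∀ j ∈ s, j < y ∧ b j < ∑ m ∈ Ico j y, q m := by
    choose! k hk using hs
    obtain ⟨y, hy, hy_good⟩ := Filter.frequently_atTop.1 (frequently_lt_sum_Ico hq hb hb0 hdiv)
      (s.sup fun j => max (k j) (j + 1))
    refine ⟨y, hy_good, fun j hj => ?_⟩
    have hjy : max (k j) (j + 1) ≤ y := (le_sup (f := fun j => max (k j) (j + 1)) hj).trans hy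
    exact ⟨by omega, (hk j hj).trans_le (sum_le_sum_of_subset_of_nonneg
      (Ico_subset_Ico_right (by omega)) fun m _ _ => hq m)⟩
  obtain ⟨F, -, hF⟩ := exists_seq_of_forall_finset_exists _
    (fun j j' => j < j' ∧ b j < ∑ m ∈ Ico j j', q m) hnext
  exact ⟨F, strictMono_nat_of_lt_succ fun i => (hF i (i + 1) i.lt_succ_self).1,
    fun i => (hF i (i + 1) i.lt_succ_self).2⟩

end

section

variable {F : ℕ → ℕ}

-- For `i ≠ 0` block `i` is `[F i, F (i + 1))`, but block `0` is all of `[0, F 1)`.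
def blockIndex (F : ℕ → ℕ) (x : ℕ) : ℕ := Nat.findGreatest (fun i => F i ≤ x) x

theorem lt_apply_blockIndex_succ (hF : StrictMono F) (x : ℕ) : x < F (blockIndex F x + 1) := by
  have h := (Nat.findGreatest_eq_iff.1 (rfl : blockIndex F x = _)).2.2
  by_contra! hle
  exact h (Nat.lt_succ_self _) ((hF.id_le _).trans hle) hle

theorem blockIndex_eq_iff (hF : StrictMono F) {i x : ℕ} (hi : i ≠ 0) :
    blockIndex F x = i ↔ x ∈ Set.Ico (F i) (F (i + 1)) := by
  refine ⟨fun h => ⟨(Nat.findGreatest_eq_iff.1 h).2.1 hi, h ▸ lt_apply_blockIndex_succ hF x⟩,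
    fun ⟨h1, h2⟩ => Nat.findGreatest_eq_iff.2 ⟨(hF.id_le i).trans h1, fun _ => h1,
      fun k hk _ hkx => absurd (hF.monotone hk) (not_le.2 (h2.trans_le' hkx))⟩⟩

theorem finite_setOf_blockIndex_eq (hF : StrictMono F) (i : ℕ) :
    {x | blockIndex F x = i}.Finite :=
  (Set.finite_Iio (F (i + 1))).subset fun x hx => hx ▸ lt_apply_blockIndex_succ hF x

theorem exists_ne_zero_mem_Ico (hF : StrictMono F) {x : ℕ} (hx : F 1 ≤ x) :
    ∃ i ≠ 0, x ∈ Set.Ico (F i) (F (i + 1)) := by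
  have hi : blockIndex F x ≠ 0 :=
    Nat.one_le_iff_ne_zero.1 (Nat.le_findGreatest ((hF.id_le 1).trans hx) hx)
  exact ⟨_, hi, (blockIndex_eq_iff hF hi).1 rfl⟩

theorem exists_finiteCycles_cyclePrice_eq_sum_Ico (p : ℕ+ → ℝ) (e : ℕ ≃ ℕ+)
    (hF : StrictMono F) :
    ∃ σ : Equiv.Perm ℕ+, FiniteCycles σ ∧ ∀ n i, i ≠ 0 → e.symm n ∈ Set.Ico (F i) (F (i + 1)) →
      cyclePrice σ p n = ∑ k ∈ Finset.Ico (F i) (F (i + 1)), p (e k) := by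
  have hfiber (i : ℕ) : {n | blockIndex F (e.symm n) = i}.Finite :=
    (finite_setOf_blockIndex_eq hF i).preimage e.symm.injective.injOn
  obtain ⟨σ, hσ⟩ := Equiv.Perm.exists_sameCycle_iff_of_finite_fibers _ hfiber
  have horbit (n : ℕ+) :
      {m | σ.SameCycle n m} = {m | blockIndex F (e.symm m) = blockIndex F (e.symm n)} := by
    ext m
    simp [hσ, eq_comm]
  refine ⟨σ, fun n => horbit n ▸ hfiber _, fun n i hi hn => ?_⟩
  have hblock :
      {m | σ.SameCycle n m} = ((Finset.Ico (F i) (F (i + 1))).map e.toEmbedding : Set ℕ+) := by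
    ext m
    simp only [horbit, (blockIndex_eq_iff hF hi).2 hn, Set.mem_ofPred_eq, Finset.coe_map,
      Function.Embedding.coeFn_mk, Finset.coe_Ico, Set.mem_image_equiv]
    exact blockIndex_eq_iff hF hi
  rw [cyclePrice, hblock, Finset.tsum_subtype', Finset.sum_map]
  rfl

end

theorem stmt_5_general (p : ℕ+ → ℝ) (hp : ∀ n, 0 ≤ p n)
    (h : ∀ δ : Equiv.Perm ℕ+, ¬ Summable fun n : ℕ+ => (n : ℝ) * p (δ n)) :
    ∀ a : ℕ+ → ℝ, (∀ n, 0 ≤ a n) → HasSum a 1 →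
      ∃ σ : Equiv.Perm ℕ+, FiniteCycles σ ∧
        {n : ℕ+ | cyclePrice σ p n ≤ a n}.Finite := by
  intro a ha hasum
  obtain ⟨c, e, hac, hc0, hc, he⟩ := hasum.summable.exists_gt_antitone_enumeration ha
  have hdiv : ¬ Summable fun m : ℕ => ((m : ℝ) + 1) * p (e m) := fun hs =>
    h (Equiv.pnatEquivNat.trans e)
      ((summable_pnat_iff_summable_succ (f := fun k : ℕ => (k : ℝ) * p (e (k - 1)))).2
        (by simpa using hs))
  obtain ⟨F, hF, hF_price⟩ :=
    exists_strictMono_lt_sum_Ico (fun m => hp (e m)) (e.summable_iff.2 hc) (fun j => hc0 _) hdiv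
  obtain ⟨σ, hσ, hσ_price⟩ := exists_finiteCycles_cyclePrice_eq_sum_Ico p e hF
  refine ⟨σ, hσ, ((Set.finite_Iio (F 1)).preimage e.symm.injective.injOn).subset
    fun n (hn : cyclePrice σ p n ≤ a n) => ?_⟩
  by_contra hn_large
  obtain ⟨i, hi, hn_block⟩ := exists_ne_zero_mem_Ico hF (not_lt.1 hn_large)
  refine not_lt.2 hn ?_
  calc a n < c n := hac n
    _ = c (e (e.symm n)) := by rw [e.apply_symm_apply]
    _ ≤ c (e (F i)) := he hn_block.1
    _ < _ := hF_price i
    _ = cyclePrice σ p n := (hσ_price n i hi hn_block).symm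

theorem stmt_5 (p : ℕ+ → ℝ) (hp : ∀ n, 0 ≤ p n) (hpsum : HasSum p 1)
    (h : ∀ δ : Equiv.Perm ℕ+, ¬ Summable fun n : ℕ+ => (n : ℝ) * p (δ n)) :
    ∀ a : ℕ+ → ℝ, (∀ n, 0 ≤ a n) → HasSum a 1 →
      ∃ σ : Equiv.Perm ℕ+, FiniteCycles σ ∧
        {n : ℕ+ | cyclePrice σ p n ≤ a n}.Finite :=
  stmt_5_general p hp h
end

section
/- Let p : ℕ⁺ → ℝ be a sequence with p_n > 0 for all n, and let σ be a permutation of the positive integers such that the rearranged sequence (p_{σ(n)}) is descending, i.e. p_{σ(n+1)} ≤ p_{σ(n)} for all n. Then ∑_{n=1}^∞ n·p_{δ(n)} = ∞ holds for every permutation δ of the positive integers if and only if ∑_{n=1}^∞ n·p_{σ(n)} = ∞. -/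
/-!
If `∑ n p_{δ(n)}` converges, reindex it as `∑ w_m a_m` with `a = p ∘ σ` antitone and `w`
injective with positive integer values. The first `k` weights, being distinct positive integers,
sum to at least `1 + ⋯ + k`; Abel summation against the antitone nonnegative `a` turns this
majorization of partial sums into `∑_{m ≤ N} m a_m ≤ ∑_{m ≤ N} w_m a_m`, so the descending
arrangement converges as well.
-/

open Finset Function

theorem sum_range_mul_le_sum_range_mul_of_antitone {a c d : ℕ → ℝ} (ha : Antitone a)
    (ha0 : ∀ i, 0 ≤ a i) {n : ℕ} (hcd : ∀ k ≤ n, ∑ i ∈ range k, c i ≤ ∑ i ∈ range k, d i) :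
    ∑ i ∈ range n, c i * a i ≤ ∑ i ∈ range n, d i * a i := by
  set D : ℕ → ℝ := fun k => ∑ i ∈ range k, (d i - c i)
  have hD : ∀ k ≤ n, 0 ≤ D k := fun k hk => by
    simpa only [D, sum_sub_distrib, sub_nonneg] using hcd k hk
  have hparts := sum_range_by_parts a (fun i => d i - c i) n
  simp only [smul_eq_mul] at hparts
  rw [← sub_nonneg, ← sum_sub_distrib]
  calc (0 : ℝ) ≤ a (n - 1) * D n - ∑ i ∈ range (n - 1), (a (i + 1) - a i) * D (i + 1) := by
        have hsum : ∑ i ∈ range (n - 1), (a (i + 1) - a i) * D (i + 1) ≤ 0 :=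
          sum_nonpos fun i hi => mul_nonpos_of_nonpos_of_nonneg
            (sub_nonpos.mpr (ha i.le_succ)) (hD _ (by rw [mem_range] at hi; omega))
        exact sub_nonneg.mpr (hsum.trans (mul_nonneg (ha0 _) (hD n le_rfl)))
    _ = _ := by rw [← hparts]; exact sum_congr rfl fun i _ => by ring

theorem sum_range_le_sum_range_of_injective {w : ℕ → ℕ} (hw : Injective w) (k : ℕ) :
    ∑ i ∈ range k, i ≤ ∑ i ∈ range k, w i := by
  have hw' : Injective fun i => (w i : ℤ) := Nat.cast_injective.comp hw
  have h := sum_range_le_sum (s := (range k).image fun i => (w i : ℤ)) (c := 0) (by simp)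
  rw [card_image_of_injective _ hw', card_range, sum_image fun _ _ _ _ hxy => hw' hxy] at h
  zify
  simpa using h

theorem Antitone.summable_succ_mul_of_injective {a : ℕ → ℝ} (ha : Antitone a)
    (ha0 : ∀ i, 0 ≤ a i) {w : ℕ → ℕ} (hw : Injective w)
    (h : Summable fun i : ℕ => ((w i : ℝ) + 1) * a i) :
    Summable fun i : ℕ => ((i : ℝ) + 1) * a i := by
  have hweight : ∀ k, ∑ i ∈ range k, ((i : ℝ) + 1) ≤ ∑ i ∈ range k, ((w i : ℝ) + 1) := by
    intro k
    simp only [sum_add_distrib, add_le_add_iff_right]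
    have h := sum_range_le_sum_range_of_injective hw k
    rw [← Nat.cast_le (α := ℝ)] at h
    push_cast at h
    exact h
  refine summable_of_sum_range_le (c := ∑' i, ((w i : ℝ) + 1) * a i)
    (fun i => by have := ha0 i; positivity) fun n => ?_
  exact (sum_range_mul_le_sum_range_mul_of_antitone ha ha0 fun k _ => hweight k).trans
    (h.sum_le_tsum _ fun i _ => by have := ha0 i; positivity)

theorem PNat.summable_mul_of_summable_injective_mul {a : ℕ+ → ℝ} (ha : ∀ n, a (n + 1) ≤ a n)
    (ha0 : ∀ n, 0 ≤ a n) {τ : ℕ+ → ℕ+} (hτ : Injective τ)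
    (h : Summable fun n : ℕ+ => (τ n : ℝ) * a n) :
    Summable fun n : ℕ+ => (n : ℝ) * a n := by
  rw [← Equiv.pnatEquivNat.symm.summable_iff] at h ⊢
  have ha' : Antitone fun k : ℕ => a k.succPNat := antitone_nat_of_succ_le fun k => ha k.succPNat
  have hw : Injective fun k : ℕ => (τ k.succPNat).natPred := fun k l hkl => by
    simpa using hτ (PNat.natPred_injective hkl)
  convert ha'.summable_succ_mul_of_injective (fun k => ha0 _) hw ?_ using 1
  · ext k; simp
  · convert h using 1
    ext k
    have hcast : ((τ k.succPNat).natPred : ℝ) + 1 = τ k.succPNat := by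
      exact_mod_cast (τ k.succPNat).natPred_add_one
    simp [hcast]

theorem stmt_7 (p : ℕ+ → ℝ) (hp : ∀ n, 0 < p n) (σ : Equiv.Perm ℕ+)
    (hσ : ∀ n : ℕ+, p (σ (n + 1)) ≤ p (σ n)) :
    (∀ δ : Equiv.Perm ℕ+, ¬ Summable fun n : ℕ+ => (n : ℝ) * p (δ n)) ↔
      ¬ Summable fun n : ℕ+ => (n : ℝ) * p (σ n) := by
  refine ⟨fun h => h σ, fun hσs δ hδ => hσs ?_⟩
  set τ : Equiv.Perm ℕ+ := δ.trans σ.symm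
  refine PNat.summable_mul_of_summable_injective_mul hσ (fun n => (hp _).le)
    τ.symm.injective ?_
  rw [← τ.summable_iff]
  simpa [τ, comp_def] using hδ
end

section
/- Let p : ℕ⁺ → ℝ be a sequence with p_n > 0 for all n, and let σ be a permutation of the positive integers such that p_{σ(n+1)} ≤ p_{σ(n)} for all n (a descending rearrangement). Then for every permutation δ of the positive integers and every positive integer m, ∑_{n=1}^{m} n·p_{σ(n)} ≤ ∑_{n=1}^∞ n·p_{δ(n)}, where the right-hand side is taken in [0, ∞]. In particular, if ∑_{n=1}^∞ n·p_{δ(n)} < ∞ for some permutation δ, then ∑_{n=1}^∞ n·p_{σ(n)} < ∞, i.e. the descending rearrangement minimizes ∑_{n=1}^∞ n·p_{δ(n)} over all permutations δ. -/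
/-!
Summation by parts writes `∑_{n ≤ m} c_n w_n`, for a nonnegative antitone weight `w`, as a
nonnegative combination of the partial sums `∑_{n ≤ k} c_n`. Distinct positive integers
`c_1, …, c_k` sum to at least `1 + ⋯ + k`, so the identity indexing `c_n = n` minimizes the
sum among injective indexings. Applied to `w = p ∘ σ` and `c = δ⁻¹ ∘ σ`, this bounds every
partial sum of the descending rearrangement by the `δ`-series.
-/

open scoped BigOperators ENNReal

open Finset Function

theorem Antitone.sum_range_mul_le_sum_range_mul {R : Type*} [CommRing R] [PartialOrder R]
    [IsOrderedRing R] {q a b : ℕ → R} {n : ℕ} (hq : Antitone q) (hq0 : ∀ i, 0 ≤ q i)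
    (hab : ∀ k ≤ n, ∑ i ∈ range k, a i ≤ ∑ i ∈ range k, b i) :
    ∑ i ∈ range n, a i * q i ≤ ∑ i ∈ range n, b i * q i := by
  have hparts := fun c : ℕ → R => sum_range_by_parts q c n
  simp only [smul_eq_mul] at hparts
  simp only [mul_comm (a _), mul_comm (b _), hparts]
  refine sub_le_sub (mul_le_mul_of_nonneg_left (hab n le_rfl) (hq0 _))
    (sum_le_sum fun i hi => ?_)
  have hi : i + 1 ≤ n := by rw [mem_range] at hi; omega
  exact mul_le_mul_of_nonpos_left (hab (i + 1) hi) (sub_nonpos.2 (hq i.le_succ))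

namespace PNat

theorem antitone_of_succ_le {α : Type*} [Preorder α] {f : ℕ+ → α}
    (hf : ∀ n, f (n + 1) ≤ f n) : Antitone f := by
  have hf' : Antitone (f ∘ Nat.succPNat) := antitone_nat_of_succ_le fun n => hf n.succPNat
  intro a b hab
  simpa using hf' (natPred_le_natPred.2 hab)

theorem sum_Icc_one_eq_sum_range {M : Type*} [AddCommMonoid M] (f : ℕ+ → M) (m : ℕ+) :
    ∑ n ∈ Icc 1 m, f n = ∑ i ∈ range m, f i.succPNat := by
  refine sum_nbij' natPred Nat.succPNat ?_ ?_ ?_ ?_ ?_ <;> intro n hn <;>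
    simp_all [← coe_le_coe]
  exact Nat.sub_one_lt_of_le n.pos hn

theorem tsum_le_of_sum_Icc_le {f : ℕ+ → ℝ≥0∞} {c : ℝ≥0∞}
    (hf : ∀ m, ∑ n ∈ Icc 1 m, f n ≤ c) : ∑' n, f n ≤ c := by
  rw [← Equiv.pnatEquivNat.symm.tsum_eq]
  refine ENNReal.tsum_le_of_sum_range_le fun k => ?_
  cases k with
  | zero => simp
  | succ k => simpa [sum_Icc_one_eq_sum_range] using hf k.succPNat

theorem sum_range_succ_le_sum_coe (s : Finset ℕ+) :
    ∑ i ∈ range #s, (i + 1) ≤ ∑ x ∈ s, (x : ℕ) := by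
  induction s using Finset.induction_on_max with
  | empty => simp
  | insert a s ha ih =>
    have has : a ∉ s := fun h => lt_irrefl a (ha a h)
    have hcard : #s + 1 ≤ a := by
      have : #s ≤ #(Iio a) := card_le_card fun x hx => mem_Iio.2 (ha x hx)
      rw [Iio_eq_Ico, bot_eq_one, card_Ico, one_coe] at this
      have := a.pos
      omega
    rw [card_insert_of_notMem has, sum_range_succ, sum_insert has]
    omega

theorem sum_Icc_mul_le_sum_Icc_mul_of_injective {w : ℕ+ → ℝ} (hw : Antitone w)
    (hw0 : ∀ n, 0 ≤ w n) {g : ℕ+ → ℕ+} (hg : Injective g) (m : ℕ+) :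
    ∑ n ∈ Icc 1 m, (n : ℝ) * w n ≤ ∑ n ∈ Icc 1 m, (g n : ℝ) * w n := by
  simp only [sum_Icc_one_eq_sum_range]
  refine (hw.comp_monotone fun _ _ => Nat.succPNat_le_succPNat.2).sum_range_mul_le_sum_range_mul
    (fun i => hw0 _) fun k _ => ?_
  have hinj : Set.InjOn (g ∘ Nat.succPNat) (range k) := (hg.comp Nat.succPNat_injective).injOn
  have hsum := sum_range_succ_le_sum_coe ((range k).image (g ∘ Nat.succPNat))
  rw [card_image_of_injOn hinj, card_range, sum_image hinj] at hsum
  exact_mod_cast hsum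

theorem sum_Icc_ofReal_le_tsum_of_antitone {p : ℕ+ → ℝ} (hp : ∀ n, 0 ≤ p n)
    {σ : Equiv.Perm ℕ+} (hσ : Antitone (p ∘ σ)) (δ : Equiv.Perm ℕ+) (m : ℕ+) :
    ∑ n ∈ Icc 1 m, ENNReal.ofReal ((n : ℝ) * p (σ n)) ≤
      ∑' n : ℕ+, ENNReal.ofReal ((n : ℝ) * p (δ n)) := by
  set τ := σ.trans δ.symm
  have hδτ : ∀ n, δ (τ n) = σ n := fun n => δ.apply_symm_apply (σ n)
  have hterm : ∀ n k : ℕ+, 0 ≤ (n : ℝ) * p k := fun n k => mul_nonneg (Nat.cast_nonneg _) (hp k)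
  calc ∑ n ∈ Icc 1 m, ENNReal.ofReal ((n : ℝ) * p (σ n))
      = ENNReal.ofReal (∑ n ∈ Icc 1 m, (n : ℝ) * p (σ n)) :=
        (ENNReal.ofReal_sum_of_nonneg fun n _ => hterm n (σ n)).symm
    _ ≤ ENNReal.ofReal (∑ n ∈ Icc 1 m, (τ n : ℝ) * p (σ n)) :=
        ENNReal.ofReal_le_ofReal <|
          sum_Icc_mul_le_sum_Icc_mul_of_injective hσ (fun n => hp _) τ.injective m
    _ = ∑ n ∈ Icc 1 m, ENNReal.ofReal ((τ n : ℝ) * p (δ (τ n))) := by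
        simp only [hδτ]
        exact ENNReal.ofReal_sum_of_nonneg fun n _ => hterm (τ n) (σ n)
    _ ≤ ∑' n, ENNReal.ofReal ((τ n : ℝ) * p (δ (τ n))) := ENNReal.sum_le_tsum _
    _ = ∑' n : ℕ+, ENNReal.ofReal ((n : ℝ) * p (δ n)) :=
        τ.tsum_eq fun n => ENNReal.ofReal ((n : ℝ) * p (δ n))

end PNat

theorem stmt_9 (p : ℕ+ → ℝ) (hp : ∀ n, 0 < p n) (σ : Equiv.Perm ℕ+)
    (hσ : ∀ n : ℕ+, p (σ (n + 1)) ≤ p (σ n)) :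
    (∀ δ : Equiv.Perm ℕ+, ∀ m : ℕ+,
        ∑ n ∈ Finset.Icc 1 m, ENNReal.ofReal ((n : ℝ) * p (σ n)) ≤
          ∑' n : ℕ+, ENNReal.ofReal ((n : ℝ) * p (δ n))) ∧
      ((∃ δ : Equiv.Perm ℕ+, Summable fun n : ℕ+ => (n : ℝ) * p (δ n)) →
        Summable fun n : ℕ+ => (n : ℝ) * p (σ n)) := by
  have hp0 : ∀ n, 0 ≤ p n := fun n => (hp n).le
  have hpartial := PNat.sum_Icc_ofReal_le_tsum_of_antitone hp0 (PNat.antitone_of_succ_le hσ)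
  refine ⟨hpartial, fun ⟨δ, hδ⟩ => ?_⟩
  have hfinite :=
    ((PNat.tsum_le_of_sum_Icc_le (hpartial δ)).trans_lt hδ.tsum_ofReal_lt_top).ne
  exact (ENNReal.summable_toReal hfinite).congr fun n =>
    ENNReal.toReal_ofReal (mul_nonneg (Nat.cast_nonneg _) (hp0 _))
end

section
/- Let p : ℕ⁺ → ℝ with p_n ≥ 0 and ∑_{n=1}^∞ p_n = 1, and let k be a positive integer. Then there exists a sequence a : ℕ⁺ → ℝ with a_n ≥ 0 and ∑_{n=1}^∞ a_n ≤ 1 such that for every finite-cycle-permutation σ of the positive integers all of whose orbits have cardinality at most k, the set {n : a_n ≥ ∑_{m ∈ orbit_σ(n)} p_m} is infinite. -/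
/-!
Split the boxes into rows `m = 0, 1, 2, …` through a bijection `ℕ+ ≃ ℕ × ℕ`. For row `m` pick
`ε_m > 0` so small that the finitely many expensive boxes `B_m = {n | ε_m ≤ p n}` satisfy
`ε_m * |B_m| ≤ δ_m`, and put `a = k * ε_m` on the first `k * |B_m| + 1` boxes of row `m`.
Whatever the guard's permutation is, the cycles through `B_m` cover at most `k * |B_m|` boxes, so
some funded box of row `m` lies on a cycle of at most `k` cheap boxes, whose price is at most
`k * ε_m`. Row `m` costs `(k * |B_m| + 1) * k * ε_m ≤ k * (k + 1) * δ_m`, which is `2⁻¹ * 2⁻ᵐ`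
for the right `δ_m`.
-/

open scoped BigOperators ENNReal

theorem finite_setOf_le_of_summable {ι : Type*} {p : ι → ℝ} (hps : Summable p) {ε : ℝ}
    (hε : 0 < ε) : {n | ε ≤ p n}.Finite := by
  have h := hps.tendsto_cofinite_zero.eventually (gt_mem_nhds hε)
  rw [Filter.eventually_cofinite] at h
  exact h.subset fun n hn => not_lt.mpr hn

theorem exists_pos_le_mul_card_le {ι : Type*} {p : ι → ℝ} (hp : ∀ n, 0 ≤ p n)
    (hps : Summable p) {δ : ℝ} (hδ : 0 < δ) :
    ∃ ε : ℝ, 0 < ε ∧ ε ≤ δ ∧ ∃ B : Finset ι, (∀ n, ε ≤ p n → n ∈ B) ∧ ε * B.card ≤ δ := by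
  classical
  obtain ⟨F, hF⟩ := (hps.hasSum.eventually
    (lt_mem_nhds (show ∑' n, p n - δ / 2 < ∑' n, p n by linarith))).exists
  set ε := δ / (2 * (F.card + 1)) with hε_def
  have hε : 0 < ε := by positivity
  have hB := finite_setOf_le_of_summable hps hε
  set B := hB.toFinset
  refine ⟨ε, hε, div_le_self hδ.le (by linarith [(F.card.cast_nonneg : (0 : ℝ) ≤ _)]),
    B, fun n hn => hB.mem_toFinset.2 hn, ?_⟩
  have htail : ∑ n ∈ B \ F, p n ≤ δ / 2 := by
    have := sum_le_hasSum (F ∪ B \ F) (fun n _ => hp n) hps.hasSum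
    rw [Finset.sum_union Finset.disjoint_sdiff] at this
    linarith
  have hlarge : (B \ F).card • ε ≤ ∑ n ∈ B \ F, p n :=
    Finset.card_nsmul_le_sum _ _ _ fun n hn => hB.mem_toFinset.1 (Finset.mem_sdiff.1 hn).1
  have hF : ε * F.card ≤ δ / 2 := by
    rw [hε_def, div_mul_eq_mul_div, div_le_iff₀ (by positivity)]
    nlinarith
  have hcard : (B.card : ℝ) ≤ (B \ F).card + F.card := by
    exact_mod_cast Finset.card_le_card_sdiff_add_card
  rw [nsmul_eq_mul] at hlarge
  calc ε * B.card ≤ ε * ((B \ F).card + F.card) := by gcongr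
    _ = (B \ F).card * ε + ε * F.card := by ring
    _ ≤ δ / 2 + δ / 2 := add_le_add (hlarge.trans htail) hF
    _ = δ := add_halves δ

theorem Equiv.Perm.exists_mem_forall_not_sameCycle {α : Type*} {σ : Equiv.Perm α} {k : ℕ}
    (hfin : ∀ x, {y | σ.SameCycle x y}.Finite) (hk : ∀ x, {y | σ.SameCycle x y}.ncard ≤ k)
    (B R : Finset α) (hR : B.card * k < R.card) : ∃ x ∈ R, ∀ b ∈ B, ¬σ.SameCycle b x := by
  classical
  let T := B.biUnion fun b => (hfin b).toFinset
  have hT : T.card ≤ B.card * k := Finset.card_biUnion_le_card_mul _ _ _ fun b _ => by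
    rw [← Set.ncard_eq_toFinset_card _ (hfin b)]
    exact hk b
  obtain ⟨x, hxR, hxT⟩ := Finset.exists_mem_notMem_of_card_lt_card (hT.trans_lt hR)
  exact ⟨x, hxR, fun b hb hbx => hxT (Finset.mem_biUnion.2 ⟨b, hb, (hfin b).mem_toFinset.2 hbx⟩)⟩

theorem tsum_subtype_le_mul_of_ncard_le {ι : Type*} {s : Set ι} (hs : s.Finite) {k : ℕ}
    (hk : s.ncard ≤ k) {f : ι → ℝ} {ε : ℝ} (hε : 0 ≤ ε) (hf : ∀ x ∈ s, f x ≤ ε) :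
    ∑' x : s, f x ≤ k * ε := by
  lift s to Finset ι using hs
  rw [Set.ncard_coe_finset] at hk
  rw [Finset.tsum_subtype']
  calc ∑ x ∈ s, f x ≤ s.card • ε := Finset.sum_le_card_nsmul _ _ _ hf
    _ ≤ k * ε := by
      rw [nsmul_eq_mul]
      gcongr

theorem exists_mem_cyclePrice_le {σ : Equiv.Perm ℕ+} {p : ℕ+ → ℝ} {k : ℕ} (hfin : FiniteCycles σ)
    (hk : ∀ n, {m | σ.SameCycle n m}.ncard ≤ k) {ε : ℝ} (hε : 0 ≤ ε) (B R : Finset ℕ+)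
    (hB : ∀ n, ε ≤ p n → n ∈ B) (hR : B.card * k < R.card) :
    ∃ n ∈ R, cyclePrice σ p n ≤ k * ε := by
  obtain ⟨n, hnR, hn⟩ := σ.exists_mem_forall_not_sameCycle hfin hk B R hR
  refine ⟨n, hnR, tsum_subtype_le_mul_of_ncard_le (hfin n) (hk n) hε fun m hm => ?_⟩
  by_contra! hpm
  exact hn m (hB m hpm.le) hm.symm

noncomputable def blockSeq (L : ℕ → ℕ) (c : ℕ → ℝ) (q : ℕ × ℕ) : ℝ :=
  if q.2 < L q.1 then c q.1 else 0

section blockSeq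

variable {L : ℕ → ℕ} {c : ℕ → ℝ}

theorem blockSeq_nonneg (hc : ∀ m, 0 ≤ c m) (q : ℕ × ℕ) : 0 ≤ blockSeq L c q := by
  unfold blockSeq
  split_ifs
  exacts [hc _, le_rfl]

theorem blockSeq_of_lt {m i : ℕ} (h : i < L m) : blockSeq L c (m, i) = c m := if_pos h

theorem blockSeq_of_le {m i : ℕ} (h : L m ≤ i) : blockSeq L c (m, i) = 0 := if_neg h.not_gt

theorem hasSum_blockSeq_row (m : ℕ) :
    HasSum (fun i => blockSeq L c (m, i)) (L m * c m) := by
  have hsum : ∑ i ∈ Finset.range (L m), blockSeq L c (m, i) = L m * c m := by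
    rw [Finset.sum_congr rfl fun i hi => blockSeq_of_lt (Finset.mem_range.1 hi), Finset.sum_const,
      Finset.card_range, nsmul_eq_mul]
  exact hsum ▸ hasSum_sum_of_ne_finset_zero fun i hi => blockSeq_of_le (by simpa using hi)

variable {b : ℕ → ℝ} (hc : ∀ m, 0 ≤ c m) (hb : Summable b) (hrow : ∀ m, L m * c m ≤ b m)
include hc hb hrow

theorem summable_blockSeq : Summable (blockSeq L c) :=
  (summable_prod_of_nonneg (blockSeq_nonneg hc)).2
    ⟨fun m => (hasSum_blockSeq_row m).summable,
      hb.of_nonneg_of_le (fun _ => tsum_nonneg fun _ => blockSeq_nonneg hc _)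
        fun m => (hasSum_blockSeq_row m).tsum_eq ▸ hrow m⟩

theorem tsum_blockSeq_le : ∑' q, blockSeq L c q ≤ ∑' m, b m := by
  rw [(summable_blockSeq hc hb hrow).tsum_prod]
  refine (summable_blockSeq hc hb hrow).prod.tsum_le_tsum (fun m => ?_) hb
  exact (hasSum_blockSeq_row m).tsum_eq ▸ hrow m

end blockSeq

theorem stmt_12 (p : ℕ+ → ℝ) (hp : ∀ n, 0 ≤ p n) (hpsum : HasSum p 1)
    (k : ℕ+) :
    ∃ a : ℕ+ → ℝ, (∀ n, 0 ≤ a n) ∧ Summable a ∧ (∑' n, a n) ≤ 1 ∧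
      ∀ σ : Equiv.Perm ℕ+, FiniteCycles σ →
        (∀ n : ℕ+, ({m : ℕ+ | σ.SameCycle n m}).ncard ≤ k) →
        {n : ℕ+ | cyclePrice σ p n ≤ a n}.Infinite := by
  set K : ℕ := (k : ℕ)
  have hK : (0 : ℝ) < K := by exact_mod_cast k.pos
  have hgeom : HasSum (fun m : ℕ => 1 / 2 / 2 ^ m) (1 : ℝ) := hasSum_geometric_two' 1
  choose ε hε hεδ B hB hεB using fun m : ℕ =>
    exists_pos_le_mul_card_le hp hpsum.summable (δ := 1 / 2 / 2 ^ m / (K * (K + 1))) (by positivity)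
  let L m := (B m).card * K + 1
  let c m := K * ε m
  have hc : ∀ m, 0 ≤ c m := fun m => mul_nonneg hK.le (hε m).le
  have hrow : ∀ m, L m * c m ≤ 1 / 2 / 2 ^ m := fun m => by
    have h1 := mul_le_mul_of_nonneg_left (hεB m) (sq_nonneg (K : ℝ))
    have h2 := mul_le_mul_of_nonneg_left (hεδ m) hK.le
    calc (L m : ℝ) * c m = K ^ 2 * (ε m * (B m).card) + K * ε m := by push_cast [L, c]; ring
      _ ≤ 1 / 2 / 2 ^ m := by
        refine (add_le_add h1 h2).trans_eq ?_
        field_simp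
  let E : ℕ+ ≃ ℕ × ℕ := Equiv.pnatEquivNat.trans Nat.pairEquiv.symm
  refine ⟨blockSeq L c ∘ E, fun n => blockSeq_nonneg hc _,
    E.summable_iff.2 (summable_blockSeq hc hgeom.summable hrow), ?_, fun σ hfin hcard => ?_⟩
  · calc ∑' n, (blockSeq L c ∘ E) n = ∑' q, blockSeq L c q := E.tsum_eq _
      _ ≤ ∑' m : ℕ, (1 / 2 / 2 ^ m : ℝ) := tsum_blockSeq_le hc hgeom.summable hrow
      _ = 1 := hgeom.tsum_eq
  have hcheap : ∀ m, ∃ n, (E n).1 = m ∧ cyclePrice σ p n ≤ blockSeq L c (E n) := fun m => by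
    let R := ({m} ×ˢ Finset.range (L m)).map E.symm.toEmbedding
    have hR : (B m).card * K < R.card := by simp [R, L]
    obtain ⟨n, hnR, hn⟩ := exists_mem_cyclePrice_le hfin hcard (hε m).le (B m) R (hB m) hR
    rw [Finset.mem_map_equiv, Equiv.symm_symm, Finset.mem_product, Finset.mem_singleton,
      Finset.mem_range] at hnR
    refine ⟨n, hnR.1, ?_⟩
    rwa [← Prod.mk.eta (p := E n), hnR.1, blockSeq_of_lt hnR.2]
  choose w hwrow hw using hcheap
  exact Set.infinite_of_injective_forall_mem (fun m m' h => by rw [← hwrow m, ← hwrow m', h]) hw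
end

section
/- Let p : ℕ⁺ → ℝ with p_n > 0 for all n and ∑_{n=1}^∞ p_n = 1. Then for every sequence a : ℕ⁺ → ℝ with a_n ≥ 0 and ∑_{n=1}^∞ a_n = 1, there exists a finite-cycle-permutation σ of the positive integers such that the set {n : a_n < ∑_{m ∈ orbit_σ(n)} p_m} is infinite (i.e., in Version 1.b, where release requires all but finitely many prisoners to find their labels, there is no strategy in general). -/
open scoped BigOperators ENNReal

/-!
Since `a` is summable, `a N → 0`, so past any box `x` there is a box `N` with `a N < p x`.
Iterating this gives boxes `c 0 < c 1 < c 2 < ⋯` with `a (c (k + 1)) < p (c k)`. The involution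
swapping `c (2k)` with `c (2k + 1)` has only cycles of length at most two, and prisoner `c (2k + 1)`
sits in a 2-cycle of price `p (c (2k)) + p (c (2k + 1)) > a (c (2k + 1))`: infinitely many
prisoners fail.
-/

open Equiv

lemma Equiv.Perm.sameCycle_iff_of_mul_self_eq_one {α : Type*} {σ : Perm α} (hσ : σ * σ = 1)
    {x y : α} : σ.SameCycle x y ↔ y = x ∨ y = σ x := by
  constructor
  · rintro ⟨i, rfl⟩
    have hsq : σ ^ (2 : ℤ) = 1 := by rw [zpow_two, hσ]
    rcases Int.emod_two_eq_zero_or_one i with hi | hi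
    · left
      rw [zpow_eq_zpow_emod i hsq, hi, zpow_zero, Perm.one_apply]
    · right
      rw [zpow_eq_zpow_emod i hsq, hi, zpow_one]
  · rintro (rfl | rfl)
    · exact Perm.SameCycle.refl _ _
    · exact ⟨1, by rw [zpow_one]⟩

lemma Equiv.Perm.setOf_sameCycle_of_mul_self_eq_one {α : Type*} {σ : Perm α} (hσ : σ * σ = 1)
    (x : α) : {y | σ.SameCycle x y} = {x, σ x} :=
  Set.ext fun _ => σ.sameCycle_iff_of_mul_self_eq_one hσ

lemma finiteCycles_of_mul_self_eq_one {σ : Perm ℕ+} (hσ : σ * σ = 1) : FiniteCycles σ := by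
  intro n
  rw [σ.setOf_sameCycle_of_mul_self_eq_one hσ]
  exact (Set.finite_singleton _).insert _

lemma cyclePrice_of_mul_self_eq_one {σ : Perm ℕ+} (hσ : σ * σ = 1) (p : ℕ+ → ℝ) {n : ℕ+}
    (hn : σ n ≠ n) : cyclePrice σ p n = p n + p (σ n) := by
  rw [cyclePrice, σ.setOf_sameCycle_of_mul_self_eq_one hσ, ← Finset.coe_pair,
    Finset.tsum_subtype', Finset.sum_pair hn.symm]

def pairSwap : Perm ℕ :=
  Function.Involutive.toPerm (fun j => if j % 2 = 0 then j + 1 else j - 1) <| by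
    intro j
    dsimp only
    split_ifs <;> omega

lemma pairSwap_mul_self : pairSwap * pairSwap = 1 := by
  ext j
  exact Function.Involutive.toPerm_involutive _ j

lemma pairSwap_two_mul_add_one (k : ℕ) : pairSwap (2 * k + 1) = 2 * k := by
  show (if (2 * k + 1) % 2 = 0 then 2 * k + 1 + 1 else 2 * k + 1 - 1) = 2 * k
  split_ifs <;> omega

lemma exists_gt_lt_of_summable {α : Type*} [LinearOrder α] [LocallyFiniteOrderBot α]
    [Infinite α] {f : α → ℝ} (hf : Summable f) {ε : ℝ} (hε : 0 < ε) (x : α) :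
    ∃ N, x < N ∧ f N < ε := by
  have hsmall : ∀ᶠ N in Filter.cofinite, f N < ε :=
    hf.tendsto_cofinite_zero.eventually (gt_mem_nhds hε)
  have hlarge : ∀ᶠ N in Filter.cofinite, x < N := by
    filter_upwards [(Set.finite_Iic x).eventually_cofinite_notMem] with N hN
    simpa using hN
  exact (hlarge.and hsmall).exists

lemma exists_perm_mul_self_eq_one_pairing {α : Type*} {c : ℕ → α} (hc : Function.Injective c) :
    ∃ σ : Perm α, σ * σ = 1 ∧ ∀ k, σ (c (2 * k + 1)) = c (2 * k) := by
  let ι : ℕ ↪ α := ⟨c, hc⟩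
  refine ⟨pairSwap.viaEmbedding ι, ?_, fun k => ?_⟩
  · rw [← Perm.viaEmbeddingHom_apply, ← map_mul, pairSwap_mul_self, map_one]
  · exact (Perm.viaEmbedding_apply _ ι _).trans (congrArg c (pairSwap_two_mul_add_one k))

theorem stmt_13_general (p : ℕ+ → ℝ) (hp : ∀ n, 0 < p n) :
    ∀ a : ℕ+ → ℝ, (∀ n, 0 ≤ a n) → HasSum a 1 →
      ∃ σ : Equiv.Perm ℕ+, FiniteCycles σ ∧
        {n : ℕ+ | a n < cyclePrice σ p n}.Infinite := by
  intro a _ hasum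
  choose next hnext_gt hnext_lt using fun x => exists_gt_lt_of_summable hasum.summable (hp x) x
  let c : ℕ → ℕ+ := fun n => next^[n] 1
  have hc_succ (n : ℕ) : c (n + 1) = next (c n) := Function.iterate_succ_apply' _ _ _
  have hc_mono : StrictMono c := strictMono_nat_of_lt_succ fun n => hc_succ n ▸ hnext_gt _
  obtain ⟨σ, hσ, hσc⟩ := exists_perm_mul_self_eq_one_pairing hc_mono.injective
  refine ⟨σ, finiteCycles_of_mul_self_eq_one hσ, Set.infinite_of_injective_forall_mem
    (f := fun k => c (2 * k + 1)) (fun i j hij => by have := hc_mono.injective hij; omega) ?_⟩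
  intro k
  have hne : σ (c (2 * k + 1)) ≠ c (2 * k + 1) := by
    rw [hσc]; exact (hc_mono (by omega)).ne
  rw [Set.mem_ofPred_eq, cyclePrice_of_mul_self_eq_one hσ p hne, hσc, hc_succ]
  linarith [hnext_lt (c (2 * k)), hp (next (c (2 * k)))]

theorem stmt_13 (p : ℕ+ → ℝ) (hp : ∀ n, 0 < p n) (hpsum : HasSum p 1) :
    ∀ a : ℕ+ → ℝ, (∀ n, 0 ≤ a n) → HasSum a 1 →
      ∃ σ : Equiv.Perm ℕ+, FiniteCycles σ ∧
        {n : ℕ+ | a n < cyclePrice σ p n}.Infinite :=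
  stmt_13_general p hp
end

section
/- Let p : ℕ⁺ → ℝ with p_n ≥ 0 and ∑_{n=1}^∞ p_n = 1, let δ be a permutation of the positive integers with ∑_{n=1}^∞ n·p_{δ(n)} < ∞, and let d be a positive integer. Then there exists a sequence a : ℕ⁺ → ℝ with a_n ≥ 0 and ∑_{n=1}^∞ a_n ≤ 1 such that for every finite-cycle-permutation σ of the positive integers with the property that every orbit O of σ satisfies max(δ⁻¹(O)) − min(δ⁻¹(O)) ≤ d (bounded diameter in the δ-reordered indexing), the set {n : a_n < ∑_{m ∈ orbit_σ(n)} p_m} is finite. -/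
open scoped BigOperators ENNReal

/-! The prisoner whose box has `δ`-rank `j` pays at most the tail price
`∑_{j ≤ k + d} p (δ k)`, since his cycle only contains boxes of `δ`-rank at least `j - d`.
The tail prices are summable, as their sum is `∑_k (k + d) p (δ k)`. So after discarding
finitely many ranks they sum to at most `1`, and paying every other prisoner his tail price
lets all but finitely many succeed. -/

theorem Summable.exists_tsum_le_and_finite_lt {ι : Type*} {T : ι → ℝ} (hT : Summable T)
    {ε : ℝ} (hε : 0 < ε) :
    ∃ a : ι → ℝ, (∀ i, 0 ≤ a i) ∧ Summable a ∧ ∑' i, a i ≤ ε ∧ {i | a i < T i}.Finite := by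
  obtain ⟨s, hs⟩ : ∃ s : Finset ι, ∑' i : {i // i ∉ s}, |T i| ≤ ε :=
    ((tendsto_tsum_compl_atTop_zero fun i => |T i|).eventually (eventually_le_nhds hε)).exists
  refine ⟨(↑s : Set ι)ᶜ.indicator fun i => |T i|,
    fun i => Set.indicator_nonneg (fun _ _ => abs_nonneg _) i, hT.abs.indicator _, ?_,
    s.finite_toSet.subset fun i hi => ?_⟩
  · rwa [← tsum_subtype]
  · by_contra his
    rw [Set.mem_ofPred, Set.indicator_of_mem (show i ∈ (↑s : Set ι)ᶜ from his)] at hi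
    exact (le_abs_self _).not_gt hi

theorem PNat.tsum_ite_le_eq_mul (c : ℕ+) (x : ℝ) :
    ∑' j : ℕ+, (if j ≤ c then x else 0) = c * x := by
  rw [tsum_eq_sum (s := Finset.Iic c) (fun j hj => by simp_all),
    Finset.sum_ite_of_true (fun j hj => by simpa using hj), Finset.sum_const, nsmul_eq_mul,
    ← Finset.Icc_bot, PNat.card_Icc]
  simp

theorem summable_tsum_tail {q : ℕ+ → ℝ} (hq : ∀ k, 0 ≤ q k)
    (h : Summable fun k : ℕ+ => (k : ℝ) * q k) (d : ℕ+) :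
    Summable fun j : ℕ+ => ∑' k : {k : ℕ+ | j ≤ k + d}, q k := by
  set G : ℕ+ × ℕ+ → ℝ := fun x => if x.2 ≤ x.1 + d then q x.1 else 0
  have hG0 : 0 ≤ G := fun x => by by_cases h : x.2 ≤ x.1 + d <;> simp [G, h, hq]
  have hq_sum : Summable q :=
    h.of_nonneg_of_le hq fun k => le_mul_of_one_le_left (hq k) (by exact_mod_cast k.pos)
  have hG : Summable G := by
    refine (summable_prod_of_nonneg hG0).2 ⟨fun k => ?_, ?_⟩
    · exact summable_of_ne_finset_zero (s := Finset.Iic (k + d)) fun j hj => by simp_all [G]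
    · simp only [G, PNat.tsum_ite_le_eq_mul, PNat.add_coe, Nat.cast_add, add_mul]
      exact h.add (hq_sum.mul_left _)
  refine ((summable_prod_of_nonneg fun x => hG0 x.swap).1 hG.prod_symm).2.congr fun j => ?_
  rw [tsum_subtype]
  exact tsum_congr fun k => by simp [G, Set.indicator]

theorem cyclePrice_le_tsum_of_subset {σ : Equiv.Perm ℕ+} {p : ℕ+ → ℝ} (hp : 0 ≤ p)
    (hp_sum : Summable p) {n : ℕ+} {S : Set ℕ+} (hS : {m | σ.SameCycle n m} ⊆ S) :
    cyclePrice σ p n ≤ ∑' m : S, p m := by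
  rw [cyclePrice, tsum_subtype, tsum_subtype]
  exact (hp_sum.indicator _).tsum_mono (hp_sum.indicator _)
    (Set.indicator_le_indicator_of_subset hS hp)

theorem tsum_tail_comp_equiv (p : ℕ+ → ℝ) (δ : Equiv.Perm ℕ+) (d j : ℕ+) :
    ∑' k : {k : ℕ+ | j ≤ k + d}, p (δ k) = ∑' m : {m : ℕ+ | j ≤ δ.symm m + d}, p m :=
  Equiv.tsum_eq (δ.subtypeEquiv fun k => by simp) (fun m : {m : ℕ+ | j ≤ δ.symm m + d} => p m)

theorem stmt_14 (p : ℕ+ → ℝ) (hp : ∀ n, 0 ≤ p n) (hpsum : HasSum p 1)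
    (δ : Equiv.Perm ℕ+) (hδ : Summable fun n : ℕ+ => (n : ℝ) * p (δ n))
    (d : ℕ+) :
    ∃ a : ℕ+ → ℝ, (∀ n, 0 ≤ a n) ∧ Summable a ∧ (∑' n, a n) ≤ 1 ∧
      ∀ σ : Equiv.Perm ℕ+, FiniteCycles σ →
        (∀ n m : ℕ+, σ.SameCycle n m → ((δ.symm n : ℕ) : ℤ) - ((δ.symm m : ℕ) : ℤ) ≤ (d : ℤ)) →
        {n : ℕ+ | a n < cyclePrice σ p n}.Finite := by
  obtain ⟨a, ha0, ha_sum, ha_le, ha_fin⟩ :=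
    (summable_tsum_tail (fun k => hp (δ k)) hδ d).exists_tsum_le_and_finite_lt one_pos
  refine ⟨a ∘ δ.symm, fun n => ha0 _, δ.symm.summable_iff.2 ha_sum,
    by rwa [Function.comp_def, Equiv.tsum_eq δ.symm a], ?_⟩
  intro σ _ hσ
  have hprice (n : ℕ+) :
      cyclePrice σ p n ≤ ∑' k : {k : ℕ+ | δ.symm n ≤ k + d}, p (δ k) := by
    rw [tsum_tail_comp_equiv]
    refine cyclePrice_le_tsum_of_subset hp hpsum.summable fun m hm => ?_
    have := hσ n m hm
    show δ.symm n ≤ δ.symm m + d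
    rw [← PNat.coe_le_coe, PNat.add_coe]
    omega
  exact (ha_fin.preimage δ.symm.injective.injOn).subset fun n hn => hn.trans_le (hprice n)
end

section
/- Let p : ℕ⁺ → ℝ with p_n ≥ 0, ∑_{n=1}^∞ p_n = 1, and suppose there are infinitely many indices n with p_n > 0. Then there exists a partition of the positive integers into finite nonempty blocks (the cycles, revealed to the prisoners) such that for every sequence a : ℕ⁺ → ℝ with a_n ≥ 0 and ∑_{n=1}^∞ a_n ≤ 1, every block B of the partition contains some n with a_n < ∑_{i ∈ B} p_i (i.e., in Version 1.d, where the prisoners are told all members of each cycle, there is no strategy in general: in each cycle at least one prisoner fails). -/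
open scoped BigOperators

/-!
Since infinitely many `p i` are positive, from any start `n` one can reach an `m` such that the
block `B = [n, m)` satisfies `|B| * ∑_{i ∈ B} p i > 1`: it suffices that `B` contains some `i` with
`p i > 0` and more than `1 / p i` elements. Cut `ℕ+` into consecutive blocks of this kind. If every
prisoner `n` of such a block had `a n ≥ ∑_{i ∈ B} p i`, then `∑ a ≥ |B| * ∑_{i ∈ B} p i > 1`.
-/

open Finset

theorem exists_lt_of_tsum_le_of_lt_card_mul {ι : Type*} {a : ι → ℝ} (ha : ∀ n, 0 ≤ a n)
    (hsa : Summable a) {B : Finset ι} {c s : ℝ} (hs : ∑' n, a n ≤ s) (hB : s < #B * c) :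
    ∃ n ∈ B, a n < c := by
  by_contra! h
  have hB_le : #B * c ≤ ∑ n ∈ B, a n := by
    simpa only [nsmul_eq_mul] using B.card_nsmul_le_sum a c h
  linarith [hsa.sum_le_tsum B fun i _ => ha i]

theorem existsUnique_mem_Ico_map_succ {β : Type*} [LinearOrder β] [LocallyFiniteOrder β]
    {N : ℕ → β} (hN : Monotone N) (hN_unbdd : ¬BddAbove (Set.range N)) {b : β}
    (hb : N 0 ≤ b) :
    ∃! B, B ∈ Set.range (fun k => Ico (N k) (N (k + 1))) ∧ b ∈ B := by
  have hb_mem : b ∈ ⋃ k, Set.Ico (N k) (N (Order.succ k)) := by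
    rw [iUnion_Ico_map_succ_eq_Ici (fun k => hN (Nat.zero_le k)) hN_unbdd]
    exact hb
  obtain ⟨k, hk⟩ := Set.mem_iUnion.1 hb_mem
  refine ⟨Ico (N k) (N (k + 1)), ⟨⟨k, rfl⟩, by simpa using hk⟩, ?_⟩
  rintro _ ⟨⟨j, rfl⟩, hj⟩
  obtain rfl | hne := eq_or_ne j k
  · rfl
  exact absurd hk <|
    Set.disjoint_left.1 (hN.pairwise_disjoint_on_Ico_succ hne) (by simpa using hj)

theorem PNat.exists_lt_card_mul_sum_Ico {p : ℕ+ → ℝ} (hp : ∀ n, 0 ≤ p n)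
    (hinf : {n : ℕ+ | 0 < p n}.Infinite) (c : ℝ) (n : ℕ+) :
    ∃ m, n < m ∧ c < #(Ico n m) * ∑ i ∈ Ico n m, p i := by
  obtain ⟨i, hi_pos, hni⟩ := hinf.exists_gt n
  obtain ⟨k, hk⟩ := exists_nat_gt (c / p i)
  have hpi : (0 : ℝ) < p i := hi_pos
  set m : ℕ+ := ((i : ℕ) + k).succPNat
  have hi_lt : i < m := by simp [m, ← PNat.coe_lt_coe]
  have hi_mem : i ∈ Ico n m := mem_Ico.2 ⟨hni.le, hi_lt⟩
  have hk_card : k ≤ #(Ico n m) := by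
    rw [PNat.card_Ico]
    have : (n : ℕ) < i := hni
    simp only [m, Nat.succPNat_coe]
    omega
  refine ⟨m, hni.trans hi_lt, ?_⟩
  calc c < k * p i := (div_lt_iff₀ hpi).1 hk
    _ ≤ #(Ico n m) * p i := by gcongr
    _ ≤ #(Ico n m) * ∑ j ∈ Ico n m, p j := by
        gcongr
        exact single_le_sum (fun j _ => hp j) hi_mem

theorem stmt_16_general (p : ℕ+ → ℝ) (hp : ∀ n, 0 ≤ p n)
    (hinf : {n : ℕ+ | 0 < p n}.Infinite) :
    ∃ P : Set (Finset ℕ+), (∀ B ∈ P, B.Nonempty) ∧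
      (∀ n : ℕ+, ∃! B, B ∈ P ∧ n ∈ B) ∧
      ∀ a : ℕ+ → ℝ, (∀ n, 0 ≤ a n) → Summable a → (∑' n, a n) ≤ 1 →
        ∀ B ∈ P, ∃ n ∈ B, a n < ∑ i ∈ B, p i := by
  choose f hf_gt hf_card using PNat.exists_lt_card_mul_sum_Ico hp hinf 1
  set N : ℕ → ℕ+ := fun k => f^[k] 1
  have hN_succ (k : ℕ) : N (k + 1) = f (N k) := Function.iterate_succ_apply' f k 1
  have hN_mono : StrictMono N := strictMono_nat_of_lt_succ fun k => hN_succ k ▸ hf_gt _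
  refine ⟨Set.range fun k => Ico (N k) (N (k + 1)), ?_, fun n => ?_, ?_⟩
  · rintro _ ⟨k, rfl⟩
    exact nonempty_Ico.2 (hN_mono k.lt_succ_self)
  · exact existsUnique_mem_Ico_map_succ hN_mono.monotone
      hN_mono.not_bddAbove_range_of_isSuccArchimedean (one_le (α := ℕ+))
  · rintro a ha hsa hs _ ⟨k, rfl⟩
    have hB : 1 < #(Ico (N k) (N (k + 1))) * ∑ i ∈ Ico (N k) (N (k + 1)), p i := by
      simpa only [hN_succ] using hf_card (N k)
    exact exists_lt_of_tsum_le_of_lt_card_mul ha hsa hs hB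

theorem stmt_16 (p : ℕ+ → ℝ) (hp : ∀ n, 0 ≤ p n) (hpsum : HasSum p 1)
    (hinf : {n : ℕ+ | 0 < p n}.Infinite) :
    ∃ P : Set (Finset ℕ+), (∀ B ∈ P, B.Nonempty) ∧
      (∀ n : ℕ+, ∃! B, B ∈ P ∧ n ∈ B) ∧
      ∀ a : ℕ+ → ℝ, (∀ n, 0 ≤ a n) → Summable a → (∑' n, a n) ≤ 1 →
        ∀ B ∈ P, ∃ n ∈ B, a n < ∑ i ∈ B, p i :=
  stmt_16_general p hp hinf
end

section
/- Let p : ℕ⁺ → ℝ with p_n ≥ 0 and ∑_{n=1}^∞ p_n = 1, and let k be a positive integer. Then for every partition of the positive integers into finite nonempty blocks each of cardinality at most k, there exists a sequence a : ℕ⁺ → ℝ with a_n ≥ 0 and ∑_{n=1}^∞ a_n ≤ 1 such that for all but finitely many n, a_n ≥ ∑_{i ∈ B(n)} p_i, where B(n) is the block containing n (i.e., in Version 1.d with cycle lengths bounded by a known k, there is a strategy). -/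
/-!
Each prisoner with a large label may pay for his whole cycle. Choose a finite set `F` of labels
carrying all but `ε / k` of the total price, let `T` be the union of the cycles meeting `F`, and let
every `n ∉ T` pay the price of his cycle, the others nothing. Since `T` is a union of cycles, the
cycles of the paying prisoners avoid `F`; each label lies in at most `k` of these cycles, so the
amounts sum to at most `k · (ε / k) = ε`, and only the finitely many prisoners in `T` fail.
-/

open Finset

section SymmetricBlocks

variable {α : Type*} {blk : α → Finset α}

/-- Double counting: each `i` lies in `blk n` only for the at most `k` indices `n ∈ blk i`. -/
theorem sum_sum_block_le_mul_sum_biUnion [DecidableEq α] {p : α → ℝ} (hp : 0 ≤ p)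
    (hsymm : ∀ n i, i ∈ blk n → n ∈ blk i) {k : ℕ} (hcard : ∀ i, #(blk i) ≤ k) (G : Finset α) :
    ∑ n ∈ G, ∑ i ∈ blk n, p i ≤ k * ∑ i ∈ G.biUnion blk, p i := by
  rw [sum_comm' (t' := G.biUnion blk) (s' := fun i => G.filter (i ∈ blk ·)) (fun n i => by
    simp only [mem_biUnion, mem_filter]
    exact ⟨fun ⟨hn, hi⟩ => ⟨⟨hn, hi⟩, n, hn, hi⟩, fun ⟨⟨hn, hi⟩, _⟩ => ⟨hn, hi⟩⟩), mul_sum]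
  refine sum_le_sum fun i _ => ?_
  rw [sum_const, nsmul_eq_mul]
  have hsub : G.filter (i ∈ blk ·) ⊆ blk i := fun n hn => hsymm n i (mem_filter.1 hn).2
  gcongr
  · exact hp i
  · exact_mod_cast (card_le_card hsub).trans (hcard i)

theorem disjoint_biUnion_of_disjoint_biUnion [DecidableEq α]
    (hsymm : ∀ n i, i ∈ blk n → n ∈ blk i) {F G : Finset α} (h : Disjoint G (F.biUnion blk)) :
    Disjoint (G.biUnion blk) F := by
  rw [disjoint_biUnion_left]
  refine fun n hn => disjoint_left.2 fun i hin hiF => disjoint_left.1 h hn ?_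
  exact mem_biUnion.2 ⟨i, hiF, hsymm n i hin⟩

theorem exists_cofinite_ge_block_sum {p : α → ℝ} (hp : 0 ≤ p) (hsum : Summable p)
    (hsymm : ∀ n i, i ∈ blk n → n ∈ blk i) {k : ℕ} (hcard : ∀ i, #(blk i) ≤ k)
    {ε : ℝ} (hε : 0 < ε) :
    ∃ a : α → ℝ, 0 ≤ a ∧ Summable a ∧ ∑' n, a n ≤ ε ∧
      {n | a n < ∑ i ∈ blk n, p i}.Finite := by
  classical
  have hsmall : {x : ℝ | k * x < ε} ∈ nhds 0 :=
    (continuous_const.mul continuous_id).continuousAt.preimage_mem_nhds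
      (Iio_mem_nhds (by simpa using hε))
  obtain ⟨F, hF⟩ := summable_iff_vanishing.1 hsum _ hsmall
  set T := F.biUnion blk
  set a : α → ℝ := fun n => if n ∈ T then 0 else ∑ i ∈ blk n, p i
  have ha : 0 ≤ a := fun n => by
    dsimp only [a]
    split_ifs
    exacts [le_rfl, sum_nonneg fun i _ => hp i]
  have hpartial : ∀ G : Finset α, ∑ n ∈ G, a n ≤ ε := fun G => by
    have hG : ∑ n ∈ G, a n = ∑ n ∈ G.filter (· ∉ T), ∑ i ∈ blk n, p i := by
      rw [sum_filter]
      exact sum_congr rfl fun n _ => by dsimp only [a]; split_ifs <;> rfl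
    have hdisj : Disjoint ((G.filter (· ∉ T)).biUnion blk) F :=
      disjoint_biUnion_of_disjoint_biUnion hsymm
        (disjoint_left.2 fun n hn => (mem_filter.1 hn).2)
    rw [hG]
    exact (sum_sum_block_le_mul_sum_biUnion hp hsymm hcard _).trans (hF _ hdisj).le
  refine ⟨a, ha, summable_of_sum_le ha hpartial, Real.tsum_le_of_sum_le ha hpartial,
    T.finite_toSet.subset fun n hn => by_contra fun hnT => ?_⟩
  exact (Set.mem_ofPred.1 hn).not_ge (if_neg (mt mem_coe.2 hnT)).ge

end SymmetricBlocks

theorem stmt_17_general (p : ℕ+ → ℝ) (hp : ∀ n, 0 ≤ p n) (hpsum : HasSum p 1)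
    (k : ℕ+) (P : Set (Finset ℕ+))
    (hcard : ∀ B ∈ P, B.card ≤ k)
    (hpart : ∀ n : ℕ+, ∃! B, B ∈ P ∧ n ∈ B) :
    ∃ a : ℕ+ → ℝ, (∀ n, 0 ≤ a n) ∧ Summable a ∧ (∑' n, a n) ≤ 1 ∧
      {n : ℕ+ | ∃ B ∈ P, n ∈ B ∧ a n < ∑ i ∈ B, p i}.Finite := by
  choose blk hblk huniq using hpart
  have hsymm : ∀ n i, i ∈ blk n → n ∈ blk i := fun n i hi =>
    huniq i (blk n) ⟨(hblk n).1, hi⟩ ▸ (hblk n).2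
  obtain ⟨a, ha, hsum, hle, hfin⟩ := exists_cofinite_ge_block_sum hp hpsum.summable hsymm
    (fun i => hcard _ (hblk i).1) one_pos
  refine ⟨a, ha, hsum, hle, hfin.subset ?_⟩
  rintro n ⟨B, hB, hnB, hlt⟩
  rwa [huniq n B ⟨hB, hnB⟩] at hlt

theorem stmt_17 (p : ℕ+ → ℝ) (hp : ∀ n, 0 ≤ p n) (hpsum : HasSum p 1)
    (k : ℕ+) (P : Set (Finset ℕ+))
    (hne : ∀ B ∈ P, B.Nonempty) (hcard : ∀ B ∈ P, B.card ≤ k)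
    (hpart : ∀ n : ℕ+, ∃! B, B ∈ P ∧ n ∈ B) :
    ∃ a : ℕ+ → ℝ, (∀ n, 0 ≤ a n) ∧ Summable a ∧ (∑' n, a n) ≤ 1 ∧
      {n : ℕ+ | ∃ B ∈ P, n ∈ B ∧ a n < ∑ i ∈ B, p i}.Finite :=
  stmt_17_general p hp hpsum k P hcard hpart
end
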